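/- arXiv:1810.06186 — 2 statements merged into one kernel-verified Lean document; each statement's English description precedes it below -/
import Mathlib

section
/- With the standard setup, suppose Y_i is complete to A_{i-2} for some i. Let A'_{i+2} = N(Y_i) ∩ A_{i+2} (the vertices of A_{i+2} with a neighbor in Y_i) and A''_{i+2} = A_{i+2} \ A'_{i+2}. Then (i) there are no edges between A'_{i+2} and A''_{i+2}, and (ii) Y_i is complete to A'_{i+2}. -/
open SimpleGraph

/-- The gem: a path 0-1-2-3 on 4 vertices plus a fifth vertex 4 adjacent to all of them. -/
def gem : SimpleGraph (Fin 5) :=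
  SimpleGraph.fromEdgeSet {s(0,1), s(1,2), s(2,3), s(4,0), s(4,1), s(4,2), s(4,3)}

/-- `G` is `H`-free: no induced subgraph of `G` is isomorphic to `H`. -/
def InducedFree {W V : Type*} (H : SimpleGraph W) (G : SimpleGraph V) : Prop :=
  ¬ Nonempty (H ↪g G)

/-- `G` is (P5, gem)-free. -/
def P5GemFree {V : Type*} (G : SimpleGraph V) : Prop :=
  InducedFree (SimpleGraph.pathGraph 5) G ∧ InducedFree gem G

/-- `X` is complete to `Y`: every vertex of `X` is adjacent to every vertex of `Y`. -/
def CompleteTo {V : Type*} (G : SimpleGraph V) (X Y : Set V) : Prop :=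
  ∀ x ∈ X, ∀ y ∈ Y, G.Adj x y

/-- `X` is anticomplete to `Y`: no vertex of `X` is adjacent to any vertex of `Y`. -/
def AnticompleteTo {V : Type*} (G : SimpleGraph V) (X Y : Set V) : Prop :=
  ∀ x ∈ X, ∀ y ∈ Y, ¬ G.Adj x y

/-- `X` is a homogeneous set: every vertex outside `X` with a neighbor in `X` is
complete to `X`. -/
def IsHomogeneousSet {V : Type*} (G : SimpleGraph V) (X : Set V) : Prop :=
  ∀ v ∉ X, (∃ x ∈ X, G.Adj v x) → ∀ x ∈ X, G.Adj v x

/-- Five nonempty pairwise disjoint sets `A 0, …, A 4` such that (indices mod 5) each `A i` is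
complete to `A (i-1) ∪ A (i+1)` and anticomplete to `A (i-2) ∪ A (i+2)`. -/
structure IsC5Partition {V : Type*} (G : SimpleGraph V) (A : Fin 5 → Set V) : Prop where
  nonempty : ∀ i, (A i).Nonempty
  disjoint : ∀ i j, i ≠ j → Disjoint (A i) (A j)
  complete_succ : ∀ i, CompleteTo G (A i) (A (i + 1))
  complete_pred : ∀ i, CompleteTo G (A i) (A (i - 1))
  anticomplete_succ : ∀ i, AnticompleteTo G (A i) (A (i + 2))
  anticomplete_pred : ∀ i, AnticompleteTo G (A i) (A (i - 2))

/-- The set `Y_i`: vertices outside `A` that are complete to `A i`, anticomplete to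
`A (i-1) ∪ A (i+1)`, have a neighbor in each of `A (i-2)` and `A (i+2)`, and are complete
to at least one of `A (i-2)`, `A (i+2)`. -/
def Yset {V : Type*} (G : SimpleGraph V) (A : Fin 5 → Set V) (i : Fin 5) : Set V :=
  {x | x ∉ (⋃ j, A j) ∧ (∀ a ∈ A i, G.Adj x a) ∧
    (∀ a ∈ A (i - 1), ¬ G.Adj x a) ∧ (∀ a ∈ A (i + 1), ¬ G.Adj x a) ∧
    (∃ a ∈ A (i - 2), G.Adj x a) ∧ (∃ a ∈ A (i + 2), G.Adj x a) ∧
    ((∀ a ∈ A (i - 2), G.Adj x a) ∨ (∀ a ∈ A (i + 2), G.Adj x a))}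

/-- The set `R`: vertices outside `A = ⋃ A i` with no neighbor in `A`. -/
def Rset {V : Type*} (G : SimpleGraph V) (A : Fin 5 → Set V) : Set V :=
  {x | x ∉ (⋃ j, A j) ∧ ∀ a ∈ ⋃ j, A j, ¬ G.Adj x a}

/-- A vertex of `Y_i` is pure if it is complete to `A (i-2) ∪ A (i+2)`. -/
def IsPureVertex {V : Type*} (G : SimpleGraph V) (A : Fin 5 → Set V) (i : Fin 5) (x : V) : Prop :=
  (∀ a ∈ A (i - 2), G.Adj x a) ∧ (∀ a ∈ A (i + 2), G.Adj x a)

/-!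
Fix `c ∈ A i` and `d ∈ A (i - 1)`. If `y ∈ Y i` sees `a₁ ∈ A (i + 2)` but not a neighbour
`a₂ ∈ A (i + 2)` of `a₁`, then `d c y a₁ a₂` is an induced `P5`; this is (i).
For (ii), let `y, y' ∈ Y i` with `y' ~ a ∈ A (i + 2)` but `y ≁ a`, and let `b ∈ A (i - 2)`,
adjacent to both. If `y ~ y'`, then `a b y c` with apex `y'` is a gem. Otherwise take a
neighbour `a₀ ∈ A (i + 2)` of `y`; by the first step `a₀ ≁ a`, so either `y a₀ y' a` with
apex `b` is a gem (if `y' ~ a₀`) or `a₀ y c y' a` is an induced `P5`.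
-/

/-- Injectivity comes for free: `f a = f b` forces `a` and `b` to have the same neighbours. -/
theorem SimpleGraph.nonempty_embedding_of_adj_iff {W V : Type*} {H : SimpleGraph W}
    {G : SimpleGraph V} (hH : Function.Injective H.neighborSet) (f : W → V)
    (hf : ∀ a b, G.Adj (f a) (f b) ↔ H.Adj a b) : Nonempty (H ↪g G) := by
  refine ⟨⟨⟨f, fun a b hab => hH ?_⟩, hf _ _⟩⟩
  ext c
  simp only [mem_neighborSet, ← hf, hab]

theorem pathGraph_five_neighborSet_injective : Function.Injective (pathGraph 5).neighborSet := by
  intro a b h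
  simp only [Set.ext_iff, mem_neighborSet, pathGraph_adj] at h
  revert a b
  decide

theorem gem_neighborSet_injective : Function.Injective gem.neighborSet := by
  intro a b h
  simp only [Set.ext_iff, mem_neighborSet, gem, fromEdgeSet_adj, Set.mem_insert_iff,
    Set.mem_singleton_iff] at h
  revert a b
  decide

section InducedSubgraphs

variable {V : Type*} {G : SimpleGraph V} {v₀ v₁ v₂ v₃ v₄ : V}

theorem not_inducedFree_pathGraph_five
    (e₀₁ : G.Adj v₀ v₁) (e₁₂ : G.Adj v₁ v₂) (e₂₃ : G.Adj v₂ v₃) (e₃₄ : G.Adj v₃ v₄)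
    (n₀₂ : ¬ G.Adj v₀ v₂) (n₀₃ : ¬ G.Adj v₀ v₃) (n₀₄ : ¬ G.Adj v₀ v₄)
    (n₁₃ : ¬ G.Adj v₁ v₃) (n₁₄ : ¬ G.Adj v₁ v₄) (n₂₄ : ¬ G.Adj v₂ v₄) :
    ¬ InducedFree (pathGraph 5) G := by
  refine not_not.mpr (nonempty_embedding_of_adj_iff pathGraph_five_neighborSet_injective
    ![v₀, v₁, v₂, v₃, v₄] fun a b => ?_)
  fin_cases a <;> fin_cases b <;> simp [pathGraph_adj, adj_comm, *]

theorem not_inducedFree_gem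
    (e₀₁ : G.Adj v₀ v₁) (e₁₂ : G.Adj v₁ v₂) (e₂₃ : G.Adj v₂ v₃)
    (e₄₀ : G.Adj v₄ v₀) (e₄₁ : G.Adj v₄ v₁) (e₄₂ : G.Adj v₄ v₂) (e₄₃ : G.Adj v₄ v₃)
    (n₀₂ : ¬ G.Adj v₀ v₂) (n₀₃ : ¬ G.Adj v₀ v₃) (n₁₃ : ¬ G.Adj v₁ v₃) :
    ¬ InducedFree gem G := by
  refine not_not.mpr (nonempty_embedding_of_adj_iff gem_neighborSet_injective
    ![v₀, v₁, v₂, v₃, v₄] fun a b => ?_)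
  fin_cases a <;> fin_cases b <;> simp [gem, adj_comm, e₄₀.symm, e₄₁.symm, e₄₂.symm, e₄₃.symm, *]

end InducedSubgraphs

namespace IsC5Partition

variable {V : Type*} {G : SimpleGraph V} {A : Fin 5 → Set V} {i : Fin 5}

theorem adj_of_mem_add_two_of_mem_sub_two (hA : IsC5Partition G A) {a b : V}
    (ha : a ∈ A (i + 2)) (hb : b ∈ A (i - 2)) : G.Adj a b :=
  hA.complete_succ (i + 2) a ha b (by rwa [show i + 2 + 1 = i - 2 by grind])

theorem not_adj_of_mem_sub_one_of_mem_add_two (hA : IsC5Partition G A) {d a : V}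
    (hd : d ∈ A (i - 1)) (ha : a ∈ A (i + 2)) : ¬ G.Adj d a :=
  hA.anticomplete_pred (i - 1) d hd a (by rwa [show i - 1 - 2 = i + 2 by grind])

end IsC5Partition

section Yset

variable {V : Type*} {G : SimpleGraph V} {A : Fin 5 → Set V} {i : Fin 5} {y : V}

theorem adj_of_mem_yset (hy : y ∈ Yset G A i) {c : V} (hc : c ∈ A i) : G.Adj y c :=
  hy.2.1 c hc

theorem not_adj_sub_one_of_mem_yset (hy : y ∈ Yset G A i) {d : V} (hd : d ∈ A (i - 1)) :
    ¬ G.Adj y d :=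
  hy.2.2.1 d hd

theorem exists_adj_add_two_of_mem_yset (hy : y ∈ Yset G A i) : ∃ a ∈ A (i + 2), G.Adj y a :=
  hy.2.2.2.2.2.1

theorem IsC5Partition.adj_of_mem_yset_of_adj_of_adj (hA : IsC5Partition G A)
    (hP5 : InducedFree (pathGraph 5) G) (hy : y ∈ Yset G A i) {a₁ a₂ : V}
    (ha₁ : a₁ ∈ A (i + 2)) (ha₂ : a₂ ∈ A (i + 2)) (hya₁ : G.Adj y a₁) (ha₁a₂ : G.Adj a₁ a₂) :
    G.Adj y a₂ := by
  obtain ⟨c, hc⟩ := hA.nonempty i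
  obtain ⟨d, hd⟩ := hA.nonempty (i - 1)
  by_contra hya₂
  have hdy : ¬ G.Adj d y := fun h => not_adj_sub_one_of_mem_yset hy hd h.symm
  exact not_inducedFree_pathGraph_five (hA.complete_pred i c hc d hd).symm
    (adj_of_mem_yset hy hc).symm hya₁ ha₁a₂ hdy (hA.not_adj_of_mem_sub_one_of_mem_add_two hd ha₁)
    (hA.not_adj_of_mem_sub_one_of_mem_add_two hd ha₂) (hA.anticomplete_succ i c hc a₁ ha₁)
    (hA.anticomplete_succ i c hc a₂ ha₂) hya₂ hP5

theorem IsC5Partition.adj_of_mem_yset_of_common_neighbor (hA : IsC5Partition G A)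
    (hfree : P5GemFree G) (hy : y ∈ Yset G A i) {y' : V} (hy' : y' ∈ Yset G A i) {b : V}
    (hb : b ∈ A (i - 2)) (hyb : G.Adj y b) (hy'b : G.Adj y' b) {a : V} (ha : a ∈ A (i + 2))
    (hy'a : G.Adj y' a) : G.Adj y a := by
  obtain ⟨c, hc⟩ := hA.nonempty i
  have hyc := adj_of_mem_yset hy hc
  have hcb : ¬ G.Adj c b := hA.anticomplete_pred i c hc b hb
  have hab := hA.adj_of_mem_add_two_of_mem_sub_two ha hb
  have hca : ¬ G.Adj c a := hA.anticomplete_succ i c hc a ha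
  by_contra hya
  by_cases hyy' : G.Adj y y'
  · exact not_inducedFree_gem hab hyb.symm hyc hy'a hy'b hyy'.symm
      (adj_of_mem_yset hy' hc) (fun h => hya h.symm) (fun h => hca h.symm)
      (fun h => hcb h.symm) hfree.2
  obtain ⟨a₀, ha₀, hya₀⟩ := exists_adj_add_two_of_mem_yset hy
  have ha₀a : ¬ G.Adj a₀ a := fun h =>
    hya (hA.adj_of_mem_yset_of_adj_of_adj hfree.1 hy ha₀ ha hya₀ h)
  by_cases hy'a₀ : G.Adj y' a₀
  · exact not_inducedFree_gem hya₀ hy'a₀.symm hy'a hyb.symm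
      (hA.adj_of_mem_add_two_of_mem_sub_two ha₀ hb).symm hy'b.symm hab.symm hyy' hya ha₀a hfree.2
  · exact not_inducedFree_pathGraph_five hya₀.symm hyc (adj_of_mem_yset hy' hc).symm hy'a
      (fun h => hA.anticomplete_succ i c hc a₀ ha₀ h.symm) (fun h => hy'a₀ h.symm) ha₀a hyy' hya
      hca hfree.1

end Yset

theorem yset_neighbors_split_general {V : Type*} (G : SimpleGraph V)
    (hfree : P5GemFree G)
    (A : Fin 5 → Set V) (hA : IsC5Partition G A)
    (i : Fin 5) (hcom : CompleteTo G (Yset G A i) (A (i - 2)))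
    (A' A'' : Set V)
    (hA' : A' = {a | a ∈ A (i + 2) ∧ ∃ y ∈ Yset G A i, G.Adj y a})
    (hA'' : A'' = A (i + 2) \ A') :
    AnticompleteTo G A' A'' ∧ CompleteTo G (Yset G A i) A' := by
  subst hA' hA''
  refine ⟨?_, ?_⟩
  · rintro a' ⟨ha', y, hy, hya'⟩ a'' ⟨ha'', hna''⟩ ha'a''
    exact hna'' ⟨ha'', y, hy, hA.adj_of_mem_yset_of_adj_of_adj hfree.1 hy ha' ha'' hya' ha'a''⟩
  · rintro y hy a ⟨ha, y', hy', hy'a⟩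
    obtain ⟨b, hb⟩ := hA.nonempty (i - 2)
    exact hA.adj_of_mem_yset_of_common_neighbor hfree hy hy' hb (hcom y hy b hb)
      (hcom y' hy' b hb) ha hy'a

/-- Claim 2.6: suppose `Y i` is complete to `A (i-2)`, and let `A' = N(Y i) ∩ A (i+2)` and
`A'' = A (i+2) \ A'`. Then (i) `A'` is anticomplete to `A''` and (ii) `Y i` is complete
to `A'`. -/
theorem yset_neighbors_split {V : Type*} [Fintype V] (G : SimpleGraph V)
    (hconn : G.Connected) (hfree : P5GemFree G)
    (hC5 : Nonempty (SimpleGraph.cycleGraph 5 ↪g G))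
    (A : Fin 5 → Set V) (hA : IsC5Partition G A)
    (hmax : ∀ B : Fin 5 → Set V, IsC5Partition G B → ¬ (⋃ i, A i) ⊂ (⋃ i, B i))
    (i : Fin 5) (hcom : CompleteTo G (Yset G A i) (A (i - 2)))
    (A' A'' : Set V)
    (hA' : A' = {a | a ∈ A (i + 2) ∧ ∃ y ∈ Yset G A i, G.Adj y a})
    (hA'' : A'' = A (i + 2) \ A') :
    AnticompleteTo G A' A'' ∧ CompleteTo G (Yset G A i) A' :=
  yset_neighbors_split_general G hfree A hA i hcom A' A'' hA' hA''
end

section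
/- With the standard setup, suppose Y_{i-2} and Y_{i+2} are both non-empty for some i, and let A_i^- = N(Y_{i-2}) ∩ A_i and A_i^+ = N(Y_{i+2}) ∩ A_i. Then: (a) Y_{i-2} is complete to Y_{i+2}, A_i^- ∩ A_i^+ = ∅, and A_i^- is anticomplete to A_i^+; (b) A_i \ (A_i^- ∪ A_i^+) is anticomplete to A_i^- ∪ A_i^+; and (c) Y_{i-2} is complete to A_{i+1} ∪ A_i^- and Y_{i+2} is complete to A_{i-1} ∪ A_i^+. -/
open SimpleGraph

/-!
Every claim is forced by an induced `P5` or gem. For `u ∈ Y (i-2)` and `v ∈ Y (i+2)`, a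
non-edge `uv` yields the induced path `b - u - d - c - v` through `A (i+1)`, `A (i-2)`,
`A (i-1)`, and a common neighbour of `u` and `v` in `A i` is the centre of a gem on
`b - u - v - c`. Since `v` has a neighbour in `A i`, `u` is therefore not complete to `A i`, so
it is complete to `A (i+1)`. A vertex complete to `A (i+1)` and anticomplete to `A (i-1)` has
no edge between its neighbours and its non-neighbours in `A i` (such an edge would centre a
gem), and one more gem/`P5` case analysis shows that all of `Y (i-2)` has the same neighbours
in `A i`. The statements about `Y (i+2)` follow by the reflection `j ↦ 2i - j` of the `C5`
structure.
-/

section InducedSubgraphs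

variable {V : Type*} {G : SimpleGraph V}

theorem nonempty_pathGraph_five_embedding {a b c d e : V}
    (hab : G.Adj a b) (hbc : G.Adj b c) (hcd : G.Adj c d) (hde : G.Adj d e)
    (hac : ¬ G.Adj a c) (had : ¬ G.Adj a d) (hae : ¬ G.Adj a e)
    (hbd : ¬ G.Adj b d) (hbe : ¬ G.Adj b e) (hce : ¬ G.Adj c e) :
    Nonempty (pathGraph 5 ↪g G) := by
  refine ⟨⟨⟨![a, b, c, d, e], ?_⟩, fun {x y} => ?_⟩⟩
  · intro x y hxy
    fin_cases x <;> fin_cases y <;>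
      first | rfl | (simp at hxy; subst hxy; simp_all [G.adj_comm])
  · change G.Adj (![a, b, c, d, e] x) (![a, b, c, d, e] y) ↔ _
    fin_cases x <;> fin_cases y <;> simp [pathGraph_adj, *, G.adj_comm]

theorem nonempty_gem_embedding {p₀ p₁ p₂ p₃ q : V}
    (h₀₁ : G.Adj p₀ p₁) (h₁₂ : G.Adj p₁ p₂) (h₂₃ : G.Adj p₂ p₃)
    (hq₀ : G.Adj q p₀) (hq₁ : G.Adj q p₁) (hq₂ : G.Adj q p₂) (hq₃ : G.Adj q p₃)
    (h₀₂ : ¬ G.Adj p₀ p₂) (h₀₃ : ¬ G.Adj p₀ p₃) (h₁₃ : ¬ G.Adj p₁ p₃) :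
    Nonempty (gem ↪g G) := by
  refine ⟨⟨⟨![p₀, p₁, p₂, p₃, q], ?_⟩, fun {x y} => ?_⟩⟩
  · intro x y hxy
    fin_cases x <;> fin_cases y <;>
      first | rfl | (simp at hxy; subst hxy; simp_all [G.adj_comm])
  · change G.Adj (![p₀, p₁, p₂, p₃, q] x) (![p₀, p₁, p₂, p₃, q] y) ↔ _
    fin_cases x <;> fin_cases y <;>
      simp [gem, *, hq₀.symm, hq₁.symm, hq₂.symm, hq₃.symm, G.adj_comm]

end InducedSubgraphs

section Ysets

variable {V : Type*} {G : SimpleGraph V} {A : Fin 5 → Set V}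

theorem Yset_reflect (c j : Fin 5) : Yset G (fun k => A (c - k)) j = Yset G A (c - j) := by
  have hunion : ⋃ k, A (c - k) = ⋃ k, A k := (Equiv.subLeft c).iSup_comp
  ext x
  simp only [Yset, Set.mem_ofPred_eq, hunion, show c - (j - 1) = c - j + 1 by grind,
    show c - (j + 1) = c - j - 1 by grind, show c - (j - 2) = c - j + 2 by grind,
    show c - (j + 2) = c - j - 2 by grind]
  tauto

theorem mem_Yset_sub_two {i : Fin 5} {u : V} (hu : u ∈ Yset G A (i - 2)) :
    (∀ a ∈ A (i - 2), G.Adj u a) ∧ (∀ a ∈ A (i - 1), ¬ G.Adj u a) ∧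
      (∃ a ∈ A (i + 1), G.Adj u a) ∧ (∃ a ∈ A i, G.Adj u a) ∧
      ((∀ a ∈ A (i + 1), G.Adj u a) ∨ ∀ a ∈ A i, G.Adj u a) := by
  obtain ⟨-, hcomp, -, hsucc, hnbr₁, hnbr₂, hdisj⟩ := hu
  simp only [show i - 2 + 1 = i - 1 by grind, show i - 2 - 2 = i + 1 by grind,
    show i - 2 + 2 = i by grind] at hsucc hnbr₁ hnbr₂ hdisj
  exact ⟨hcomp, hsucc, hnbr₁, hnbr₂, hdisj⟩

theorem mem_Yset_add_two {i : Fin 5} {v : V} (hv : v ∈ Yset G A (i + 2)) :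
    (∀ a ∈ A (i + 1), ¬ G.Adj v a) ∧ (∀ a ∈ A (i - 2), ¬ G.Adj v a) ∧
      (∃ a ∈ A (i - 1), G.Adj v a) ∧ ∃ a ∈ A i, G.Adj v a := by
  obtain ⟨-, -, hpred, hsucc, hnbr₁, hnbr₂, -⟩ := hv
  simp only [show i + 2 - 1 = i + 1 by grind, show i + 2 + 1 = i - 2 by grind,
    show i + 2 - 2 = i by grind, show i + 2 + 2 = i - 1 by grind] at hpred hsucc hnbr₁ hnbr₂
  exact ⟨hpred, hsucc, hnbr₂, hnbr₁⟩

end Ysets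

namespace IsC5Partition

variable {V : Type*} {G : SimpleGraph V} {A : Fin 5 → Set V}

theorem adj_of_eq_add_one (hA : IsC5Partition G A) {j k : Fin 5} (hjk : k = j + 1) {a b : V}
    (ha : a ∈ A j) (hb : b ∈ A k) : G.Adj a b := by
  subst hjk
  exact hA.complete_succ j a ha b hb

theorem not_adj_of_eq_add_two (hA : IsC5Partition G A) {j k : Fin 5} (hjk : k = j + 2)
    {a b : V} (ha : a ∈ A j) (hb : b ∈ A k) : ¬ G.Adj a b := by
  subst hjk
  exact hA.anticomplete_succ j a ha b hb

theorem reflect (hA : IsC5Partition G A) (c : Fin 5) : IsC5Partition G (fun j => A (c - j)) where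
  nonempty j := hA.nonempty (c - j)
  disjoint j k hjk := hA.disjoint _ _ (sub_right_injective.ne hjk)
  complete_succ j _ ha _ hb := (hA.adj_of_eq_add_one (by grind) hb ha).symm
  complete_pred j _ ha _ hb := hA.adj_of_eq_add_one (by grind) ha hb
  anticomplete_succ j _ ha _ hb h := hA.not_adj_of_eq_add_two (by grind) hb ha h.symm
  anticomplete_pred j _ ha _ hb := hA.not_adj_of_eq_add_two (by grind) ha hb

theorem adj_of_mem_Yset (hA : IsC5Partition G A) (hfree : P5GemFree G) {i : Fin 5} {u v : V}
    (hu : u ∈ Yset G A (i - 2)) (hv : v ∈ Yset G A (i + 2)) : G.Adj u v := by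
  obtain ⟨hu_comp, hu_pred, ⟨b, hb, hub⟩, -⟩ := mem_Yset_sub_two hu
  obtain ⟨hv_succ, hv_sub_two, ⟨c, hc, hvc⟩, -⟩ := mem_Yset_add_two hv
  obtain ⟨d, hd⟩ := hA.nonempty (i - 2)
  by_contra huv
  exact hfree.1 <| nonempty_pathGraph_five_embedding hub.symm (hu_comp d hd)
    (hA.adj_of_eq_add_one (by grind) hd hc) hvc.symm (hA.not_adj_of_eq_add_two (by grind) hb hd)
    (fun h => hA.not_adj_of_eq_add_two (by grind) hc hb h.symm) (fun h => hv_succ b hb h.symm)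
    (hu_pred c hc) huv (fun h => hv_sub_two d hd h.symm)

theorem not_adj_of_mem_Yset_of_adj (hA : IsC5Partition G A) (hfree : P5GemFree G) {i : Fin 5}
    {u v a : V} (hu : u ∈ Yset G A (i - 2)) (hv : v ∈ Yset G A (i + 2)) (ha : a ∈ A i)
    (hua : G.Adj u a) : ¬ G.Adj v a := by
  obtain ⟨-, hu_pred, ⟨b, hb, hub⟩, -⟩ := mem_Yset_sub_two hu
  obtain ⟨hv_succ, -, ⟨c, hc, hvc⟩, -⟩ := mem_Yset_add_two hv
  intro hva
  exact hfree.2 <| nonempty_gem_embedding hub.symm (hA.adj_of_mem_Yset hfree hu hv) hvc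
    (hA.complete_succ i a ha b hb) hua.symm hva.symm (hA.complete_pred i a ha c hc)
    (fun h => hv_succ b hb h.symm) (fun h => hA.not_adj_of_eq_add_two (by grind) hc hb h.symm)
    (hu_pred c hc)

theorem complete_succ_of_mem_Yset (hA : IsC5Partition G A) (hfree : P5GemFree G) {i : Fin 5}
    {u : V} (hu : u ∈ Yset G A (i - 2)) (hp : (Yset G A (i + 2)).Nonempty) :
    ∀ b ∈ A (i + 1), G.Adj u b := by
  obtain ⟨v, hv⟩ := hp
  obtain ⟨a, ha, hva⟩ := (mem_Yset_add_two hv).2.2.2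
  refine (mem_Yset_sub_two hu).2.2.2.2.resolve_right fun hu_comp => ?_
  exact hA.not_adj_of_mem_Yset_of_adj hfree hu hv ha (hu_comp a ha) hva

theorem not_adj_of_adj_of_not_adj (hA : IsC5Partition G A) (hfree : P5GemFree G) {i : Fin 5}
    {x a a' : V} (hx_succ : ∀ b ∈ A (i + 1), G.Adj x b)
    (hx_pred : ∀ c ∈ A (i - 1), ¬ G.Adj x c) (ha : a ∈ A i) (ha' : a' ∈ A i)
    (hxa : G.Adj x a) (hxa' : ¬ G.Adj x a') : ¬ G.Adj a a' := by
  obtain ⟨b, hb⟩ := hA.nonempty (i + 1)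
  obtain ⟨c, hc⟩ := hA.nonempty (i - 1)
  intro haa'
  exact hfree.2 <| nonempty_gem_embedding (hx_succ b hb) (hA.complete_succ i a' ha' b hb).symm
    (hA.complete_pred i a' ha' c hc) hxa.symm (hA.complete_succ i a ha b hb) haa'
    (hA.complete_pred i a ha c hc) hxa' (hx_pred c hc)
    (fun h => hA.not_adj_of_eq_add_two (by grind) hc hb h.symm)

theorem adj_of_adj_of_mem_Yset (hA : IsC5Partition G A) (hfree : P5GemFree G) {i : Fin 5}
    {u u' a : V} (hu : u ∈ Yset G A (i - 2)) (hu' : u' ∈ Yset G A (i - 2))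
    (hp : (Yset G A (i + 2)).Nonempty) (ha : a ∈ A i) (hu'a : G.Adj u' a) : G.Adj u a := by
  obtain ⟨v, hv⟩ := hp
  obtain ⟨b, hb⟩ := hA.nonempty (i + 1)
  obtain ⟨a₁, ha₁, hua₁⟩ := (mem_Yset_sub_two hu).2.2.2.1
  have huv := hA.adj_of_mem_Yset hfree hu hv
  have hu'v := hA.adj_of_mem_Yset hfree hu' hv
  have hu_succ := hA.complete_succ_of_mem_Yset hfree hu ⟨v, hv⟩
  have hu'_succ := hA.complete_succ_of_mem_Yset hfree hu' ⟨v, hv⟩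
  have hva := hA.not_adj_of_mem_Yset_of_adj hfree hu' hv ha hu'a
  have hva₁ := hA.not_adj_of_mem_Yset_of_adj hfree hu hv ha₁ hua₁
  have hvb : ¬ G.Adj v b := (mem_Yset_add_two hv).1 b hb
  by_contra hua
  have ha₁a :=
    hA.not_adj_of_adj_of_not_adj hfree hu_succ (mem_Yset_sub_two hu).2.1 ha₁ ha hua₁ hua
  by_cases huu' : G.Adj u u'
  · -- gem: `a - b - u - v` with centre `u'`
    exact hfree.2 <| nonempty_gem_embedding (hA.complete_succ i a ha b hb) (hu_succ b hb).symm
      huv hu'a (hu'_succ b hb) huu'.symm hu'v (fun h => hua h.symm) (fun h => hva h.symm)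
      (fun h => hvb h.symm)
  by_cases hu'a₁ : G.Adj u' a₁
  · -- gem: `a - u' - a₁ - u` with centre `b`
    exact hfree.2 <| nonempty_gem_embedding hu'a.symm hu'a₁ hua₁.symm
      (hA.complete_succ i a ha b hb).symm (hu'_succ b hb).symm
      (hA.complete_succ i a₁ ha₁ b hb).symm (hu_succ b hb).symm (fun h => ha₁a h.symm)
      (fun h => hua h.symm) (fun h => huu' h.symm)
  · -- induced path `a₁ - u - v - u' - a`
    exact hfree.1 <| nonempty_pathGraph_five_embedding hua₁.symm huv hu'v.symm hu'a
      (fun h => hva₁ h.symm) (fun h => hu'a₁ h.symm) ha₁a huu' hua hva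

theorem anticompleteTo_nbhd_sdiff (hA : IsC5Partition G A) (hfree : P5GemFree G) {i : Fin 5}
    (hp : (Yset G A (i + 2)).Nonempty) :
    AnticompleteTo G {a | a ∈ A i ∧ ∃ y ∈ Yset G A (i - 2), G.Adj y a}
      (A i \ {a | a ∈ A i ∧ ∃ y ∈ Yset G A (i - 2), G.Adj y a}) := by
  rintro a ⟨ha, u, hu, hua⟩ a' ⟨ha', ha'_nbhd⟩
  exact hA.not_adj_of_adj_of_not_adj hfree (hA.complete_succ_of_mem_Yset hfree hu hp)
    (mem_Yset_sub_two hu).2.1 ha ha' hua fun h => ha'_nbhd ⟨ha', u, hu, h⟩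

theorem completeTo_succ_union_nbhd (hA : IsC5Partition G A) (hfree : P5GemFree G) {i : Fin 5}
    (hp : (Yset G A (i + 2)).Nonempty) :
    CompleteTo G (Yset G A (i - 2))
      (A (i + 1) ∪ {a | a ∈ A i ∧ ∃ y ∈ Yset G A (i - 2), G.Adj y a}) := by
  rintro u hu a (ha | ⟨ha, u', hu', hu'a⟩)
  · exact hA.complete_succ_of_mem_Yset hfree hu hp a ha
  · exact hA.adj_of_adj_of_mem_Yset hfree hu hu' hp ha hu'a

end IsC5Partition

theorem two_ysets_abc_general {V : Type*} (G : SimpleGraph V)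
    (hfree : P5GemFree G)
    (A : Fin 5 → Set V) (hA : IsC5Partition G A)
    (i : Fin 5)
    (hm : (Yset G A (i - 2)).Nonempty) (hp : (Yset G A (i + 2)).Nonempty)
    (Am Ap : Set V)
    (hAm : Am = {a | a ∈ A i ∧ ∃ y ∈ Yset G A (i - 2), G.Adj y a})
    (hAp : Ap = {a | a ∈ A i ∧ ∃ y ∈ Yset G A (i + 2), G.Adj y a}) :
    (CompleteTo G (Yset G A (i - 2)) (Yset G A (i + 2)) ∧ Am ∩ Ap = ∅ ∧
        AnticompleteTo G Am Ap) ∧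
      AnticompleteTo G (A i \ (Am ∪ Ap)) (Am ∪ Ap) ∧
      (CompleteTo G (Yset G A (i - 2)) (A (i + 1) ∪ Am) ∧
        CompleteTo G (Yset G A (i + 2)) (A (i - 1) ∪ Ap)) := by
  have hB := hA.reflect (i + i)
  have hm' : (Yset G (fun j => A (i + i - j)) (i + 2)).Nonempty := by
    rwa [Yset_reflect, show i + i - (i + 2) = i - 2 by grind]
  have hAm_anti := hA.anticompleteTo_nbhd_sdiff hfree hp
  have hAp_anti := hB.anticompleteTo_nbhd_sdiff hfree hm'
  have hAm_comp := hA.completeTo_succ_union_nbhd hfree hp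
  have hAp_comp := hB.completeTo_succ_union_nbhd hfree hm'
  simp only [Yset_reflect, show i + i - (i - 2) = i + 2 by grind, show i + i - i = i by grind,
    show i + i - (i + 1) = i - 1 by grind] at hAp_anti hAp_comp
  rw [← hAm] at hAm_anti hAm_comp
  rw [← hAp] at hAp_anti hAp_comp
  have hAp_sub : Ap ⊆ A i \ Am := by
    rw [hAm, hAp]
    rintro a ⟨ha, v, hv, hva⟩
    exact ⟨ha, fun ⟨_, u, hu, hua⟩ => hA.not_adj_of_mem_Yset_of_adj hfree hu hv ha hua hva⟩
  refine ⟨⟨fun u hu v hv => hA.adj_of_mem_Yset hfree hu hv, ?_, ?_⟩, ?_, hAm_comp, hAp_comp⟩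
  · exact Set.disjoint_iff_inter_eq_empty.mp
      (Set.disjoint_of_subset_right hAp_sub Set.disjoint_sdiff_right)
  · exact fun a ha a' ha' => hAm_anti a ha a' (hAp_sub ha')
  · rintro x ⟨hx, hx_nbhd⟩ y (hy | hy) hxy
    · exact hAm_anti y hy x ⟨hx, fun h => hx_nbhd (Or.inl h)⟩ hxy.symm
    · exact hAp_anti y hy x ⟨hx, fun h => hx_nbhd (Or.inr h)⟩ hxy.symm

/-- Claim 2.7 (a)-(c): suppose `Y (i-2)` and `Y (i+2)` are both non-empty, and let
`A⁻ = N(Y (i-2)) ∩ A i` and `A⁺ = N(Y (i+2)) ∩ A i`. Then (a) `Y (i-2)` is complete to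
`Y (i+2)`, `A⁻ ∩ A⁺ = ∅` and `A⁻` is anticomplete to `A⁺`; (b) `A i \ (A⁻ ∪ A⁺)` is
anticomplete to `A⁻ ∪ A⁺`; (c) `Y (i-2)` is complete to `A (i+1) ∪ A⁻` and `Y (i+2)` is
complete to `A (i-1) ∪ A⁺`. -/
theorem two_ysets_abc {V : Type*} [Fintype V] (G : SimpleGraph V)
    (hconn : G.Connected) (hfree : P5GemFree G)
    (hC5 : Nonempty (SimpleGraph.cycleGraph 5 ↪g G))
    (A : Fin 5 → Set V) (hA : IsC5Partition G A)
    (hmax : ∀ B : Fin 5 → Set V, IsC5Partition G B → ¬ (⋃ i, A i) ⊂ (⋃ i, B i))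
    (i : Fin 5)
    (hm : (Yset G A (i - 2)).Nonempty) (hp : (Yset G A (i + 2)).Nonempty)
    (Am Ap : Set V)
    (hAm : Am = {a | a ∈ A i ∧ ∃ y ∈ Yset G A (i - 2), G.Adj y a})
    (hAp : Ap = {a | a ∈ A i ∧ ∃ y ∈ Yset G A (i + 2), G.Adj y a}) :
    (CompleteTo G (Yset G A (i - 2)) (Yset G A (i + 2)) ∧ Am ∩ Ap = ∅ ∧
        AnticompleteTo G Am Ap) ∧
      AnticompleteTo G (A i \ (Am ∪ Ap)) (Am ∪ Ap) ∧
      (CompleteTo G (Yset G A (i - 2)) (A (i + 1) ∪ Am) ∧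
        CompleteTo G (Yset G A (i + 2)) (A (i - 1) ∪ Ap)) :=
  two_ysets_abc_general G hfree A hA i hm hp Am Ap hAm hAp
end
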